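/- arXiv:2510.15230 — 2 statements merged into one kernel-verified Lean document; each statement's English description precedes it below -/
import Mathlib

section
/- Let M be a right-bounded chain complex of R-modules (M_i = 0 for all i ≪ 0). If for every i the modules H_i(M) and M_i have finite flat dimension, then for every i the modules B_i(M), Z_i(M), and C_i(M) = M_i/B_i(M) all have finite flat dimension. -/
universe u

open CategoryTheory CategoryTheory.Limits

/-- Flat dimension (Tor-dimension) of a module, valued in `ℕ∞`, via vanishing of `Tor`. -/
noncomputable def flatDim (R : Type u) [CommRing R] (M : Type u) [AddCommGroup M]
    [Module R M] : ℕ∞ :=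
  sInf {n : ℕ∞ | ∀ (N : Type u) [AddCommGroup N] [Module R N] (i : ℕ), n < (i : ℕ∞) →
    Subsingleton (((Tor (ModuleCat.{u} R) i).obj (ModuleCat.of R M)).obj (ModuleCat.of R N))}

variable (R : Type u) [CommRing R]

/-- The boundary submodule `B_i(M) = im (∂_{i+1})` of a chain complex. -/
noncomputable def bdries (M : ChainComplex (ModuleCat.{u} R) ℤ) (i : ℤ) :
    Submodule R (M.X i) :=
  LinearMap.range (M.d (i + 1) i).hom

/-- The cycle submodule `Z_i(M) = ker (∂_i)` of a chain complex. -/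
noncomputable def cycs (M : ChainComplex (ModuleCat.{u} R) ℤ) (i : ℤ) :
    Submodule R (M.X i) :=
  LinearMap.ker (M.d i (i - 1)).hom

/-- The homology module `H_i(M) = Z_i(M)/B_i(M)`. -/
noncomputable def homol (M : ChainComplex (ModuleCat.{u} R) ℤ) (i : ℤ) : Type u :=
  cycs R M i ⧸ (Submodule.comap (cycs R M i).subtype (bdries R M i))

noncomputable instance (M : ChainComplex (ModuleCat.{u} R) ℤ) (i : ℤ) :
    AddCommGroup (homol R M i) := by unfold homol; infer_instance

noncomputable instance (M : ChainComplex (ModuleCat.{u} R) ℤ) (i : ℤ) :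
    Module R (homol R M i) := by unfold homol; infer_instance

/-!
The three short exact sequences `0 → Z_i → M_i → B_{i-1} → 0`, `0 → B_i → Z_i → H_i → 0` and
`0 → B_i → M_i → C_i → 0` reduce everything to two-out-of-three properties of finite flat
dimension, which come from the long exact `Tor` sequence: tensoring a short exact sequence with a
projective resolution of the second argument gives a short exact sequence of complexes. Since
`B_i = 0` for `i ≪ 0`, ascending induction shows that every `B_i` has finite flat dimension, and
then so do `Z_i` and `C_i`.
-/

open MonoidalCategory

section

variable {R}

lemma CategoryTheory.ProjectiveResolution.isZero_tor_iff {C : Type*} [Category* C]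
    [MonoidalCategory C] [Abelian C] [MonoidalPreadditive C] [HasProjectiveResolutions C]
    {N : C} (P : ProjectiveResolution N) (X : C) (i : ℕ) :
    IsZero (((Tor C i).obj X).obj N) ↔
      IsZero (((((tensoringLeft C).obj X).mapHomologicalComplex _).obj P.complex).homology i) :=
  (P.isoLeftDerivedObj _ i).isZero_iff

namespace CategoryTheory.ShortComplex

noncomputable def tensorRightComplex {C : Type*} [Category* C] [MonoidalCategory C]
    [Preadditive C] [MonoidalPreadditive C] {ι : Type*} {c : ComplexShape ι}
    (S : ShortComplex C) (K : HomologicalComplex C c) :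
    ShortComplex (HomologicalComplex C c) :=
  ShortComplex.mk
    ((NatTrans.mapHomologicalComplex ((tensoringLeft C).map S.f) c).app K)
    ((NatTrans.mapHomologicalComplex ((tensoringLeft C).map S.g) c).app K)
    (by
      ext n
      exact (comp_whiskerRight S.f S.g (K.X n)).symm.trans (by
        rw [S.zero, MonoidalPreadditive.zero_whiskerRight]; rfl))

namespace ShortExact

variable {S : ShortComplex (ModuleCat.{u} R)} (hS : S.ShortExact)
include hS

lemma tensorRightComplex {ι : Type*} {c : ComplexShape ι}
    (K : HomologicalComplex (ModuleCat.{u} R) c) [∀ n, Module.Flat R (K.X n)] :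
    (S.tensorRightComplex K).ShortExact := by
  refine HomologicalComplex.shortExact_of_degreewise_shortExact _ fun n ↦
    ModuleCat.shortComplex_shortExact _ ?_ ?_ ?_
  · exact Module.Flat.rTensor_exact _ ((moduleCat_exact_iff_function_exact S).mp hS.exact)
  · exact Module.Flat.rTensor_preserves_injective_linearMap _ hS.moduleCat_injective_f
  · exact LinearMap.rTensor_surjective _ hS.moduleCat_surjective_g

variable (N : ModuleCat.{u} R) (i : ℕ)

lemma isZero_tor_X₁ (h₂ : IsZero (((Tor (ModuleCat.{u} R) i).obj S.X₂).obj N))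
    (h₃ : IsZero (((Tor (ModuleCat.{u} R) (i + 1)).obj S.X₃).obj N)) :
    IsZero (((Tor (ModuleCat.{u} R) i).obj S.X₁).obj N) := by
  let P := projectiveResolution N
  rw [P.isZero_tor_iff] at h₂ h₃ ⊢
  exact ((hS.tensorRightComplex P.complex).homology_exact₁ (i + 1) i (by simp)).isZero_X₂
    (h₃.eq_of_src _ _) (h₂.eq_of_tgt _ _)

lemma isZero_tor_X₃ (h₁ : IsZero (((Tor (ModuleCat.{u} R) i).obj S.X₁).obj N))
    (h₂ : IsZero (((Tor (ModuleCat.{u} R) (i + 1)).obj S.X₂).obj N)) :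
    IsZero (((Tor (ModuleCat.{u} R) (i + 1)).obj S.X₃).obj N) := by
  let P := projectiveResolution N
  rw [P.isZero_tor_iff] at h₁ h₂ ⊢
  exact ((hS.tensorRightComplex P.complex).homology_exact₃ (i + 1) i (by simp)).isZero_X₂
    (h₂.eq_of_src _ _) (h₁.eq_of_tgt _ _)

end ShortExact

end CategoryTheory.ShortComplex

def HasFiniteFlatDim (M : ModuleCat.{u} R) : Prop :=
  ∃ n : ℕ, ∀ (N : ModuleCat.{u} R) (i : ℕ), n < i →
    IsZero (((Tor (ModuleCat.{u} R) i).obj M).obj N)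

lemma flatDim_ne_top_iff (M : Type u) [AddCommGroup M] [Module R M] :
    flatDim R M ≠ ⊤ ↔ HasFiniteFlatDim (ModuleCat.of R M) := by
  simp only [flatDim, ne_eq, sInf_eq_top, Set.mem_ofPred_eq, not_forall, exists_prop,
    HasFiniteFlatDim, ModuleCat.isZero_iff_subsingleton]
  constructor
  · rintro ⟨n, hn, hne⟩
    lift n to ℕ using hne
    exact ⟨n, fun N i hi ↦ hn N i (by exact_mod_cast hi)⟩
  · rintro ⟨n, hn⟩
    exact ⟨n, fun N _ _ i hi ↦ hn (ModuleCat.of R N) i (by exact_mod_cast hi), by simp⟩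

lemma CategoryTheory.Limits.IsZero.hasFiniteFlatDim {M : ModuleCat.{u} R} (hM : IsZero M) :
    HasFiniteFlatDim M := by
  refine ⟨0, fun N i _ ↦ ?_⟩
  let P := projectiveResolution N
  rw [P.isZero_tor_iff]
  exact ShortComplex.isZero_homology_of_isZero_X₂ _
    (Functor.map_isZero ((tensoringRight (ModuleCat.{u} R)).obj (P.complex.X i)) hM)

namespace CategoryTheory.ShortComplex.ShortExact

variable {S : ShortComplex (ModuleCat.{u} R)} (hS : S.ShortExact)
include hS

lemma hasFiniteFlatDim_X₁ (h₂ : HasFiniteFlatDim S.X₂) (h₃ : HasFiniteFlatDim S.X₃) :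
    HasFiniteFlatDim S.X₁ := by
  obtain ⟨n₂, h₂⟩ := h₂
  obtain ⟨n₃, h₃⟩ := h₃
  exact ⟨max n₂ n₃, fun N i hi ↦
    hS.isZero_tor_X₁ N i (h₂ N i (by omega)) (h₃ N (i + 1) (by omega))⟩

lemma hasFiniteFlatDim_X₃ (h₁ : HasFiniteFlatDim S.X₁) (h₂ : HasFiniteFlatDim S.X₂) :
    HasFiniteFlatDim S.X₃ := by
  obtain ⟨n₁, h₁⟩ := h₁
  obtain ⟨n₂, h₂⟩ := h₂
  refine ⟨max n₁ n₂ + 1, fun N i hi ↦ ?_⟩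
  obtain ⟨i, rfl⟩ : ∃ j, i = j + 1 := ⟨i - 1, by omega⟩
  exact hS.isZero_tor_X₃ N i (h₁ N i (by omega)) (h₂ N (i + 1) (by omega))

end CategoryTheory.ShortComplex.ShortExact

open ModuleCat (shortComplexOfCompEqZero shortComplex_shortExact)

variable (M : ChainComplex (ModuleCat.{u} R) ℤ)

lemma bdries_le_cycs (i : ℤ) : bdries R M i ≤ cycs R M i := by
  rintro _ ⟨y, rfl⟩
  exact congr($(M.d_comp_d (i + 1) i (i - 1)).hom y)

lemma bdries_eq_range_d {i j : ℤ} (h : j + 1 = i) :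
    bdries R M j = LinearMap.range (M.d i j).hom := by
  subst h; rfl

lemma hasFiniteFlatDim_cycs (i : ℤ) (hX : HasFiniteFlatDim (M.X i))
    (hB : HasFiniteFlatDim (ModuleCat.of R (bdries R M (i - 1)))) :
    HasFiniteFlatDim (ModuleCat.of R (cycs R M i)) := by
  rw [bdries_eq_range_d M (sub_add_cancel i 1)] at hB
  have hexact : Function.Exact (cycs R M i).subtype (M.d i (i - 1)).hom.rangeRestrict := by
    rw [LinearMap.exact_iff, LinearMap.ker_rangeRestrict, Submodule.range_subtype]; rfl
  exact (shortComplex_shortExact (shortComplexOfCompEqZero _ _ hexact.linearMap_comp_eq_zero)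
    hexact (Submodule.injective_subtype _)
    (M.d i (i - 1)).hom.surjective_rangeRestrict).hasFiniteFlatDim_X₁ hX hB

lemma hasFiniteFlatDim_bdries_of_cycs (i : ℤ)
    (hZ : HasFiniteFlatDim (ModuleCat.of R (cycs R M i)))
    (hH : HasFiniteFlatDim (ModuleCat.of R (homol R M i))) :
    HasFiniteFlatDim (ModuleCat.of R (bdries R M i)) := by
  have hexact : Function.Exact (Submodule.inclusion (bdries_le_cycs M i))
      (Submodule.comap (cycs R M i).subtype (bdries R M i)).mkQ := by
    rw [LinearMap.exact_iff, Submodule.ker_mkQ, Submodule.range_inclusion]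
  exact (shortComplex_shortExact (shortComplexOfCompEqZero _ _ hexact.linearMap_comp_eq_zero)
    hexact (Submodule.inclusion_injective (bdries_le_cycs M i))
    (Submodule.mkQ_surjective _)).hasFiniteFlatDim_X₁ hZ hH

lemma hasFiniteFlatDim_quotient_bdries (i : ℤ) (hX : HasFiniteFlatDim (M.X i))
    (hB : HasFiniteFlatDim (ModuleCat.of R (bdries R M i))) :
    HasFiniteFlatDim (ModuleCat.of R (M.X i ⧸ bdries R M i)) := by
  have hexact := LinearMap.exact_subtype_mkQ (bdries R M i)
  exact (shortComplex_shortExact (shortComplexOfCompEqZero _ _ hexact.linearMap_comp_eq_zero)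
    hexact (Submodule.injective_subtype _)
    (Submodule.mkQ_surjective _)).hasFiniteFlatDim_X₃ hB hX

lemma hasFiniteFlatDim_bdries (hbdd : ∃ n₀ : ℤ, ∀ i < n₀, Subsingleton (M.X i))
    (hX : ∀ i, HasFiniteFlatDim (M.X i))
    (hH : ∀ i, HasFiniteFlatDim (ModuleCat.of R (homol R M i))) (i : ℤ) :
    HasFiniteFlatDim (ModuleCat.of R (bdries R M i)) := by
  obtain ⟨n₀, hn₀⟩ := hbdd
  have hlow (j : ℤ) (hj : j < n₀) : HasFiniteFlatDim (ModuleCat.of R (bdries R M j)) :=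
    have := hn₀ j hj
    (ModuleCat.isZero_of_subsingleton _).hasFiniteFlatDim
  refine Int.inductionOn' i (n₀ - 1) (hlow _ (sub_one_lt n₀)) (fun k _ hk ↦ ?_)
    (fun k hk _ ↦ hlow _ (by omega))
  have hZ := hasFiniteFlatDim_cycs M (k + 1) (hX _) (by rwa [add_sub_cancel_right])
  exact hasFiniteFlatDim_bdries_of_cycs M (k + 1) hZ (hH _)

end

theorem flatDim_cycles_bdries_coker_finite
    (M : ChainComplex (ModuleCat.{u} R) ℤ)
    (hbdd : ∃ n₀ : ℤ, ∀ i < n₀, Subsingleton (M.X i))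
    (hH : ∀ i, flatDim R (homol R M i) ≠ ⊤)
    (hX : ∀ i, flatDim R (M.X i) ≠ ⊤) :
    ∀ i, flatDim R (bdries R M i) ≠ ⊤ ∧ flatDim R (cycs R M i) ≠ ⊤ ∧
      flatDim R ((M.X i) ⧸ (bdries R M i)) ≠ ⊤ := by
  simp only [flatDim_ne_top_iff] at hH hX ⊢
  have hB := hasFiniteFlatDim_bdries M hbdd hX hH
  exact fun i ↦ ⟨hB i, hasFiniteFlatDim_cycs M i (hX i) (hB (i - 1)),
    hasFiniteFlatDim_quotient_bdries M i (hX i) (hB i)⟩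
end

section
/- Let M be a left-bounded chain complex of R-modules (M_i = 0 for all i ≫ 0). If for every i the modules H_i(M) and M_i have finite injective dimension, then for every i the modules B_i(M), Z_i(M), and C_i(M) = M_i/B_i(M) all have finite injective dimension. -/
universe u

open CategoryTheory CategoryTheory.Limits CategoryTheory.Abelian

noncomputable instance hasDerCatModule (R : Type u) [CommRing R] :
    HasDerivedCategory.{u+1} (ModuleCat.{u} R) :=
  HasDerivedCategory.standard _

instance hasExtModule (R : Type u) [CommRing R] : HasExt.{u+1} (ModuleCat.{u} R) :=
  hasExt_of_hasDerivedCategory _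

/-- Injective dimension of a module, valued in `ℕ∞`, via vanishing of `Ext`. -/
noncomputable def injDim (R : Type u) [CommRing R] (M : Type u) [AddCommGroup M]
    [Module R M] : ℕ∞ :=
  sInf {n : ℕ∞ | ∀ (N : Type u) [AddCommGroup N] [Module R N] (i : ℕ), n < (i : ℕ∞) →
    Subsingleton (Abelian.Ext (ModuleCat.of R N) (ModuleCat.of R M) i)}

variable (R : Type u) [CommRing R]

/-!
Finite injective dimension has the two-out-of-three property in short exact sequences, by the
long exact `Ext` sequence. Apply it to `0 → Z_{i+1} → M_{i+1} → B_i → 0`,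
`0 → B_i → Z_i → H_i → 0` and `0 → B_i → M_i → C_i → 0`. Since `Z_i = 0` for `i ≫ 0`,
the first two sequences give finiteness of `Z_i` and `B_i` by descending induction on `i`,
and the third then gives it for `C_i`.
-/

namespace CategoryTheory

variable {C : Type*} [Category C] [Abelian C]

lemma HasInjectiveDimensionLT.mono {X : C} {n m : ℕ} (h : HasInjectiveDimensionLT X n)
    (hnm : n ≤ m) : HasInjectiveDimensionLT X m :=
  @hasInjectiveDimensionLT_of_ge _ _ _ X n m hnm h

lemma injectiveDimension_ne_top_iff_exists_lt (X : C) :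
    injectiveDimension X ≠ ⊤ ↔ ∃ n, HasInjectiveDimensionLT X n := by
  rw [injectiveDimension_ne_top_iff]
  exact ⟨fun ⟨n, h⟩ => ⟨n + 1, h⟩, fun ⟨n, h⟩ => ⟨n, h.mono n.le_succ⟩⟩

namespace ShortComplex.ShortExact

variable {S : ShortComplex C}

lemma injectiveDimension_X₂_ne_top (hS : S.ShortExact) (h₁ : injectiveDimension S.X₁ ≠ ⊤)
    (h₃ : injectiveDimension S.X₃ ≠ ⊤) : injectiveDimension S.X₂ ≠ ⊤ := by
  rw [injectiveDimension_ne_top_iff_exists_lt] at *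
  obtain ⟨n₁, h₁⟩ := h₁
  obtain ⟨n₃, h₃⟩ := h₃
  exact ⟨max n₁ n₃, hS.hasInjectiveDimensionLT_X₂ _ (h₁.mono (le_max_left _ _))
    (h₃.mono (le_max_right _ _))⟩

lemma injectiveDimension_X₃_ne_top (hS : S.ShortExact) (h₁ : injectiveDimension S.X₁ ≠ ⊤)
    (h₂ : injectiveDimension S.X₂ ≠ ⊤) : injectiveDimension S.X₃ ≠ ⊤ := by
  rw [injectiveDimension_ne_top_iff_exists_lt] at *
  obtain ⟨n₁, h₁⟩ := h₁
  obtain ⟨n₂, h₂⟩ := h₂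
  exact ⟨max n₁ n₂, hS.hasInjectiveDimensionLT_X₃ _ (h₂.mono (le_max_right _ _))
    (h₁.mono (by omega))⟩

end ShortComplex.ShortExact

end CategoryTheory

section Modules

variable {R}

lemma injDim_ne_top_iff (X : Type u) [AddCommGroup X] [Module R X] :
    injDim R X ≠ ⊤ ↔ injectiveDimension (ModuleCat.of R X) ≠ ⊤ := by
  rw [injectiveDimension_ne_top_iff, injDim, Ne, sInf_eq_top]
  push Not
  constructor
  · rintro ⟨n, hn, hn_top⟩
    lift n to ℕ using hn_top
    exact ⟨n, HasInjectiveDimensionLT.mk fun i hi N e =>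
      (hn N i (by exact_mod_cast hi)).elim _ _⟩
  · rintro ⟨n, hn⟩
    exact ⟨n, fun N _ _ i hi => HasInjectiveDimensionLT.subsingleton _ (n + 1) i
      (by exact_mod_cast hi) _, ENat.natCast_ne_top n⟩

lemma injDim_ne_top_of_subsingleton (X : Type u) [AddCommGroup X] [Module R X]
    [Subsingleton X] : injDim R X ≠ ⊤ := by
  rw [injDim_ne_top_iff,
    (injectiveDimension_eq_bot_iff _).mpr (ModuleCat.isZero_of_subsingleton _)]
  exact bot_ne_top

variable {X : Type u} [AddCommGroup X] [Module R X]

lemma Submodule.shortExact_subtype_mkQ (A : Submodule R X) :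
    (ModuleCat.shortComplexOfCompEqZero A.subtype A.mkQ
      (LinearMap.exact_subtype_mkQ A).linearMap_comp_eq_zero).ShortExact :=
  ModuleCat.shortComplex_shortExact _ (LinearMap.exact_subtype_mkQ A) A.injective_subtype
    A.mkQ_surjective

lemma injDim_ne_top_of_submodule_of_quotient {A : Submodule R X} (hA : injDim R A ≠ ⊤)
    (hQ : injDim R (X ⧸ A) ≠ ⊤) : injDim R X ≠ ⊤ := by
  rw [injDim_ne_top_iff] at *
  exact A.shortExact_subtype_mkQ.injectiveDimension_X₂_ne_top hA hQ

lemma injDim_quotient_ne_top {A : Submodule R X} (hA : injDim R A ≠ ⊤)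
    (hX : injDim R X ≠ ⊤) : injDim R (X ⧸ A) ≠ ⊤ := by
  rw [injDim_ne_top_iff] at *
  exact A.shortExact_subtype_mkQ.injectiveDimension_X₃_ne_top hA hX

lemma LinearEquiv.injDim_ne_top {Y : Type u} [AddCommGroup Y] [Module R Y] (e : X ≃ₗ[R] Y)
    (hX : injDim R X ≠ ⊤) : injDim R Y ≠ ⊤ := by
  rw [injDim_ne_top_iff] at *
  rwa [← injectiveDimension_eq_of_iso e.toModuleIso]

end Modules

namespace ChainComplex

variable {R} (M : ChainComplex (ModuleCat.{u} R) ℤ)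

lemma bdries_eq_range {j k : ℤ} (h : k + 1 = j) :
    bdries R M k = LinearMap.range (M.d j k).hom := by
  subst h; rfl

lemma cycs_eq_ker {j k : ℤ} (h : j - 1 = k) : cycs R M j = LinearMap.ker (M.d j k).hom := by
  subst h; rfl

lemma bdries_le_cycs (i : ℤ) : bdries R M i ≤ cycs R M i := by
  rintro _ ⟨y, rfl⟩
  exact LinearMap.mem_ker.mpr (congr($(M.d_comp_d (i + 1) i (i - 1)).hom y))

lemma injDim_bdries_ne_top {j k : ℤ} (h : k + 1 = j) (hZ : injDim R (cycs R M j) ≠ ⊤)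
    (hX : injDim R (M.X j) ≠ ⊤) : injDim R (bdries R M k) ≠ ⊤ := by
  rw [M.cycs_eq_ker (by omega : j - 1 = k)] at hZ
  rw [M.bdries_eq_range h]
  exact (M.d j k).hom.quotKerEquivRange.injDim_ne_top (injDim_quotient_ne_top hZ hX)

lemma injDim_cycs_ne_top {i : ℤ} (hB : injDim R (bdries R M i) ≠ ⊤)
    (hH : injDim R (homol R M i) ≠ ⊤) : injDim R (cycs R M i) ≠ ⊤ :=
  injDim_ne_top_of_submodule_of_quotient
    ((Submodule.comapSubtypeEquivOfLe (M.bdries_le_cycs i)).symm.injDim_ne_top hB) hH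

lemma injDim_cycs_ne_top_of_bounded (hbdd : ∃ n₀ : ℤ, ∀ i > n₀, Subsingleton (M.X i))
    (hH : ∀ i, injDim R (homol R M i) ≠ ⊤) (hX : ∀ i, injDim R (M.X i) ≠ ⊤) (i : ℤ) :
    injDim R (cycs R M i) ≠ ⊤ := by
  obtain ⟨n₀, hn₀⟩ := hbdd
  have h_top (k : ℤ) (hk : n₀ < k) : injDim R (cycs R M k) ≠ ⊤ :=
    have := hn₀ k hk
    injDim_ne_top_of_subsingleton _
  induction i using Int.inductionOn' (b := n₀ + 1) with
  | zero => exact h_top _ (by omega)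
  | succ k hk _ => exact h_top _ (by omega)
  | pred k _ ih => exact M.injDim_cycs_ne_top (M.injDim_bdries_ne_top (by omega) ih (hX k)) (hH _)

end ChainComplex

theorem injDim_cycles_bdries_coker_finite
    (M : ChainComplex (ModuleCat.{u} R) ℤ)
    (hbdd : ∃ n₀ : ℤ, ∀ i > n₀, Subsingleton (M.X i))
    (hH : ∀ i, injDim R (homol R M i) ≠ ⊤)
    (hX : ∀ i, injDim R (M.X i) ≠ ⊤) :
    ∀ i, injDim R (bdries R M i) ≠ ⊤ ∧ injDim R (cycs R M i) ≠ ⊤ ∧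
      injDim R ((M.X i) ⧸ (bdries R M i)) ≠ ⊤ := by
  intro i
  have hZ := M.injDim_cycs_ne_top_of_bounded hbdd hH hX
  have hB : injDim R (bdries R M i) ≠ ⊤ := M.injDim_bdries_ne_top rfl (hZ (i + 1)) (hX (i + 1))
  exact ⟨hB, hZ i, injDim_quotient_ne_top hB (hX i)⟩
end
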